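/- arXiv:2409.17118 — 5 statements merged into one kernel-verified Lean document; each statement's English description precedes it below -/
import Mathlib

section
/- Let M ⊆ ℝ^d be a closed set and p ∈ ℝ^d \ M. For each n ∈ ℕ let fₙ : [0,∞) → ℝ^d and ζⁿ ∈ [0,∞] be such that fₙ(t) ∈ M for all t < ζⁿ and fₙ(t) = p for all t ≥ ζⁿ. Let f : [0,∞) → ℝ^d be right-continuous and suppose fₙ → f uniformly on every compact subset of [0,∞). Define ζ := inf{t ≥ 0 : f(t) ∉ M} ∈ [0,∞] (with inf ∅ = ∞). Then: (a) f(t) ∈ M for all t < ζ and f(t) = p for all t ≥ ζ; (b) if ζ < ∞ then there exists N such that ζⁿ = ζ for all n ≥ N; (c) if ζ = ∞ then ζⁿ → ∞ as n → ∞. -/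
open Filter Metric
open scoped NNReal ENNReal Topology

/-- Pathwise convergence of killing times: if killed `M`-valued paths
`fₙ` (with end point `p` and killing times `ζⁿ`) converge locally uniformly to a
right-continuous path `f`, then `f` is a killed `M`-valued path with killing time
`ζ = inf{t : f t ∉ M}`, and the `ζⁿ` stabilize at `ζ` (if `ζ < ∞`) or tend to `∞`
(if `ζ = ∞`). -/
theorem stmt_1 {d : ℕ} (M : Set (EuclideanSpace ℝ (Fin d))) (hM : IsClosed M)
    (p : EuclideanSpace ℝ (Fin d)) (hp : p ∉ M)
    (f : ℕ → ℝ≥0 → EuclideanSpace ℝ (Fin d)) (ζn : ℕ → ℝ≥0∞)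
    (hfM : ∀ n, ∀ t : ℝ≥0, (t : ℝ≥0∞) < ζn n → f n t ∈ M)
    (hfp : ∀ n, ∀ t : ℝ≥0, ζn n ≤ (t : ℝ≥0∞) → f n t = p)
    (g : ℝ≥0 → EuclideanSpace ℝ (Fin d))
    (hg : ∀ t : ℝ≥0, ContinuousWithinAt g (Set.Ici t) t)
    (hconv : ∀ k : ℝ≥0, TendstoUniformlyOn f g atTop (Set.Icc 0 k))
    (ζ : ℝ≥0∞) (hζ : ζ = ⨅ t ∈ {t : ℝ≥0 | g t ∉ M}, (t : ℝ≥0∞)) :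
    ((∀ t : ℝ≥0, (t : ℝ≥0∞) < ζ → g t ∈ M) ∧
      (∀ t : ℝ≥0, ζ ≤ (t : ℝ≥0∞) → g t = p)) ∧
    (ζ < ∞ → ∃ N : ℕ, ∀ n ≥ N, ζn n = ζ) ∧
    (ζ = ∞ → Tendsto ζn atTop (𝓝 ∞)) := by
  classical
  have limpt : ∀ t : ℝ≥0, Tendsto (fun n => f n t) atTop (𝓝 (g t)) := fun t =>
    (hconv t).tendsto_at ⟨zero_le, le_rfl⟩
  have memMp : ∀ t : ℝ≥0, g t ∈ M ∪ {p} := by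
    intro t
    refine (hM.union isClosed_singleton).mem_of_tendsto (limpt t)
      (Eventually.of_forall fun n => ?_)
    rcases lt_or_ge (t : ℝ≥0∞) (ζn n) with h | h
    · exact Or.inl (hfM n t h)
    · exact Or.inr (hfp n t h)
  have notM : ∀ t : ℝ≥0, g t ∉ M → g t = p := fun t ht => (memMp t).resolve_left ht
  have a1 : ∀ t : ℝ≥0, (t : ℝ≥0∞) < ζ → g t ∈ M := by
    intro t ht
    by_contra h
    have : ζ ≤ (t : ℝ≥0∞) := hζ ▸ iInf₂_le t h
    exact absurd ht (not_lt.mpr this)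
  rcases M.eq_empty_or_nonempty with hMe | hMne
  · subst hMe
    have hinf0 : (⨅ t : ℝ≥0, (t : ℝ≥0∞)) = 0 :=
      le_antisymm ((iInf_le _ 0).trans_eq ENNReal.coe_zero) (zero_le)
    have hζn0 : ∀ n, ζn n = 0 := by
      intro n
      refine le_antisymm ?_ (zero_le)
      have h1 : ζn n ≤ ⨅ t : ℝ≥0, (t : ℝ≥0∞) := by
        refine le_iInf fun t => ?_
        by_contra h
        exact (hfM n t (not_le.mp h))
      exact h1.trans_eq hinf0
    have hζ0 : ζ = 0 := by
      rw [hζ]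
      refine le_antisymm ?_ (zero_le)
      have h0 : (0 : ℝ≥0) ∈ {t : ℝ≥0 | g t ∉ (∅ : Set (EuclideanSpace ℝ (Fin d)))} :=
        Set.notMem_empty _
      exact (iInf₂_le 0 h0).trans_eq ENNReal.coe_zero
    have gp : ∀ t : ℝ≥0, g t = p := by
      intro t
      have h2 : Tendsto (fun n => f n t) atTop (𝓝 p) :=
        tendsto_const_nhds.congr fun n => (hfp n t ((hζn0 n).trans_le (zero_le))).symm
      exact tendsto_nhds_unique (limpt t) h2
    refine ⟨⟨a1, fun t _ => gp t⟩, fun _ => ⟨0, fun n _ => (hζn0 n).trans hζ0.symm⟩,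
      fun h => absurd (hζ0 ▸ h) (by simp)⟩
  · set ε := infDist p M with hε
    have hεpos : 0 < ε := (hM.notMem_iff_infDist_pos hMne).mp hp
    have lemA : ∀ u v : ℝ≥0, u ≤ v → g u = p → g v = p := by
      intro u v huv hgu
      by_contra hgv
      have hgvM : g v ∈ M := (memMp v).resolve_right hgv
      have hev := (Metric.tendstoUniformlyOn_iff.mp (hconv v)) (ε / 2) (half_pos hεpos)
      rcases hev.exists with ⟨n, hn⟩
      have hu : dist (g u) (f n u) < ε / 2 := hn u ⟨zero_le, huv⟩
      have hfnu : f n u ∉ M := by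
        intro hmem
        have h1 : ε ≤ dist p (f n u) := infDist_le_dist_of_mem hmem
        rw [hgu] at hu
        linarith
      have hζle : ζn n ≤ (u : ℝ≥0∞) := by
        by_contra h
        exact hfnu (hfM n u (not_le.mp h))
      have hfv : f n v = p := hfp n v (hζle.trans (ENNReal.coe_le_coe.mpr huv))
      have hv : dist (g v) (f n v) < ε / 2 := hn v ⟨zero_le, le_rfl⟩
      rw [hfv] at hv
      have h2 : ε ≤ dist p (g v) := infDist_le_dist_of_mem hgvM
      rw [dist_comm] at h2
      linarith
    have keyAbove : ∀ v : ℝ≥0, ζ < (v : ℝ≥0∞) → g v = p := by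
      intro v hv
      rw [hζ] at hv
      have hex : ∃ u : ℝ≥0, g u ∉ M ∧ u ≤ v := by
        by_contra h
        push_neg at h
        have : (v : ℝ≥0∞) ≤ ⨅ t ∈ {t : ℝ≥0 | g t ∉ M}, (t : ℝ≥0∞) :=
          le_iInf₂ fun u hu => ENNReal.coe_le_coe.mpr (h u hu).le
        exact absurd hv (not_lt.mpr this)
      obtain ⟨u, huM, huv⟩ := hex
      exact lemA u v huv (notM u huM)
    have key : ∀ t : ℝ≥0, ζ ≤ (t : ℝ≥0∞) → g t = p := by
      intro t ht
      rcases lt_or_eq_of_le ht with h | h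
      · exact keyAbove t h
      · have h1 : Tendsto g (𝓝[>] t) (𝓝 (g t)) :=
          (hg t).mono Set.Ioi_subset_Ici_self
        have h2 : Tendsto g (𝓝[>] t) (𝓝 p) := by
          refine tendsto_const_nhds.congr' ?_
          filter_upwards [self_mem_nhdsWithin] with v hv
          exact (keyAbove v (by rw [h]; exact_mod_cast hv)).symm
        exact tendsto_nhds_unique h1 h2
    refine ⟨⟨a1, key⟩, ?_, ?_⟩
    · intro hζfin
      set s := ζ.toNNReal with hs
      have hsζ : (s : ℝ≥0∞) = ζ := ENNReal.coe_toNNReal hζfin.ne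
      have hgs : g s = p := key s hsζ.ge
      have hev := (Metric.tendstoUniformlyOn_iff.mp (hconv s)) (ε / 2) (half_pos hεpos)
      rcases eventually_atTop.mp hev with ⟨N, hN⟩
      refine ⟨N, fun n hn => ?_⟩
      have hsup := hN n hn
      have h1 : ζn n ≤ (s : ℝ≥0∞) := by
        by_contra h
        have hfns : f n s ∈ M := hfM n s (not_le.mp h)
        have ha : ε ≤ dist p (f n s) := infDist_le_dist_of_mem hfns
        have hb : dist (g s) (f n s) < ε / 2 := hsup s ⟨zero_le, le_rfl⟩
        rw [hgs] at hb
        linarith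
      have h2 : ζ ≤ ζn n := by
        by_contra h
        push_neg at h
        have hfin : ζn n ≠ ∞ := (h.trans hζfin).ne
        set u := (ζn n).toNNReal with hu
        have huζ : (u : ℝ≥0∞) = ζn n := ENNReal.coe_toNNReal hfin
        have hus : u ≤ s := by
          rw [← ENNReal.coe_le_coe, huζ, hsζ]; exact h.le
        have hfnu : f n u = p := hfp n u huζ.ge
        have hguM : g u ∈ M := a1 u (by rw [huζ]; exact h)
        have h3 : ε ≤ dist p (g u) := infDist_le_dist_of_mem hguM
        have h4 : dist (g u) (f n u) < ε / 2 := hsup u ⟨zero_le, hus⟩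
        rw [hfnu, dist_comm] at h4
        linarith
      exact le_antisymm (h1.trans_eq hsζ) h2
    · intro hζtop
      rw [ENNReal.tendsto_nhds_top_iff_nnreal]
      intro x
      have hev := (Metric.tendstoUniformlyOn_iff.mp (hconv x)) ε hεpos
      filter_upwards [hev] with n hn
      by_contra h
      push_neg at h
      have hfnx : f n x = p := hfp n x h
      have hgxM : g x ∈ M := a1 x (by rw [hζtop]; exact ENNReal.coe_lt_top)
      have h3 : ε ≤ dist p (g x) := infDist_le_dist_of_mem hgxM
      have h4 : dist (g x) (f n x) < ε := hn x ⟨zero_le, le_rfl⟩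
      rw [hfnx, dist_comm] at h4
      linarith
end

section
/- Let M ⊆ ℝ^d be a closed set and p ∈ ℝ^d \ M. Let {U_j}_{j∈ℕ} be open subsets of ℝ^d with M ⊆ ⋃_{j} U_j and p ∉ U_j for every j. Let j : ℕ → ℕ be a sequence in which every natural number appears infinitely many times. Let f : [0,∞) → ℝ^d be càdlàg, and let ζ ∈ [0,∞] be such that f(t) ∈ M for all t < ζ and f(t) = p for all t ≥ ζ. Define τ₀ := 0 and τ_{i+1} := inf{t ≥ τ_i : f(t) ∉ U_{j(i)}} (with inf ∅ = ∞). Then: (a) the sequence (τ_i) is nondecreasing and τ_i ≤ ζ for all i; (b) if ζ < ∞ there exists I such that τ_i = ζ for all i ≥ I; (c) if ζ = ∞ then τ_i → ∞ as i → ∞. -/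
open Filter
open scoped NNReal ENNReal Topology

private lemma stmt_2_key {d : ℕ} {M : Set (EuclideanSpace ℝ (Fin d))} (hM : IsClosed M)
    {U : ℕ → Set (EuclideanSpace ℝ (Fin d))} (hUopen : ∀ a, IsOpen (U a))
    (hcover : M ⊆ ⋃ a, U a)
    {j : ℕ → ℕ} (hj : ∀ a : ℕ, ∃ᶠ i in atTop, j i = a)
    {f : ℝ≥0 → EuclideanSpace ℝ (Fin d)}
    (hrc : ∀ t : ℝ≥0, ContinuousWithinAt f (Set.Ici t) t)
    (hll : ∀ t : ℝ≥0, 0 < t → ∃ l, Tendsto f (nhdsWithin t (Set.Iio t)) (𝓝 l))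
    {ζ : ℝ≥0∞} (hfM : ∀ t : ℝ≥0, (t : ℝ≥0∞) < ζ → f t ∈ M)
    {τ : ℕ → ℝ≥0∞} (hτ0 : τ 0 = 0) (hmono : Monotone τ)
    (hτ : ∀ i, τ (i + 1) =
      ⨅ t ∈ {t : ℝ≥0 | τ i ≤ (t : ℝ≥0∞) ∧ f t ∉ U (j i)}, (t : ℝ≥0∞))
    (h1 : ∀ i, τ i < ζ) (hfin : (⨆ i, τ i) < ∞) : False := by
  set L := ⨆ i, τ i with hLdef
  have hLζ : L ≤ ζ := iSup_le fun i => (h1 i).le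
  set c := L.toNNReal with hcdef
  have hcL : (c : ℝ≥0∞) = L := ENNReal.coe_toNNReal hfin.ne
  by_cases hc : ∃ i, τ i = L
  · -- eventually constant case: use right-continuity at c
    obtain ⟨i, hi⟩ := hc
    have hconst : ∀ k, i ≤ k → τ k = L :=
      fun k hk => le_antisymm (le_iSup τ k) (hi ▸ hmono hk)
    have hfc : f c ∈ M := hfM c (by rw [hcL]; exact hi ▸ h1 i)
    obtain ⟨a, ha⟩ := Set.mem_iUnion.mp (hcover hfc)
    have hmem : {t : ℝ≥0 | f t ∈ U a} ∈ 𝓝[≥] c := hrc c ((hUopen a).mem_nhds ha)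
    obtain ⟨u, hu, hsub⟩ := mem_nhdsGE_iff_exists_Ico_subset.mp hmem
    obtain ⟨i₀, hji₀, hi₀ge⟩ := ((hj a).and_eventually (eventually_ge_atTop i)).exists
    have h2 : (u : ℝ≥0∞) ≤ τ (i₀ + 1) := by
      rw [hτ]
      refine le_iInf₂ fun t ht => ?_
      have htc : c ≤ t := by
        rw [← ENNReal.coe_le_coe, hcL, ← hconst i₀ hi₀ge]; exact ht.1
      have hnt : f t ∉ U a := hji₀ ▸ ht.2
      have : t ∉ Set.Ico c u := fun h => hnt (hsub h)
      have : u ≤ t := not_lt.mp fun h => this ⟨htc, h⟩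
      exact ENNReal.coe_le_coe.mpr this
    have h3 : τ (i₀ + 1) = L := hconst _ (hi₀ge.trans (Nat.le_succ _))
    have : (u : ℝ≥0∞) ≤ (c : ℝ≥0∞) := by rw [hcL]; exact h2.trans_eq h3
    exact absurd (ENNReal.coe_le_coe.mp this) (not_le.mpr hu)
  · -- strictly approaching case: use left limit at c
    push_neg at hc
    have hlt : ∀ i, τ i < L := fun i => (le_iSup τ i).lt_of_ne (hc i)
    have hLpos : 0 < L := hτ0 ▸ hlt 0
    have hcpos : 0 < c := by
      rw [← ENNReal.coe_pos, hcL]; exact hLpos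
    obtain ⟨x, hx⟩ := hll c hcpos
    haveI : (𝓝[<] c).NeBot := nhdsWithin_Iio_self_neBot' ⟨0, hcpos⟩
    have hxM : x ∈ M := by
      refine hM.mem_of_tendsto hx ?_
      filter_upwards [self_mem_nhdsWithin] with t ht
      refine hfM t ?_
      calc (t : ℝ≥0∞) < (c : ℝ≥0∞) := ENNReal.coe_lt_coe.mpr ht
        _ = L := hcL
        _ ≤ ζ := hLζ
    obtain ⟨a, ha⟩ := Set.mem_iUnion.mp (hcover hxM)
    have hmem : {t : ℝ≥0 | f t ∈ U a} ∈ 𝓝[<] c := hx ((hUopen a).mem_nhds ha)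
    obtain ⟨l, hl, hsub⟩ := (mem_nhdsLT_iff_exists_Ioo_subset' hcpos).mp hmem
    have hlL : (l : ℝ≥0∞) < L := by rw [← hcL]; exact ENNReal.coe_lt_coe.mpr hl
    obtain ⟨N, hN⟩ := lt_iSup_iff.mp hlL
    obtain ⟨i₀, hji₀, hi₀ge⟩ := ((hj a).and_eventually (eventually_ge_atTop N)).exists
    have h2 : L ≤ τ (i₀ + 1) := by
      rw [hτ]
      refine le_iInf₂ fun t ht => ?_
      have h4 : (l : ℝ≥0∞) < (t : ℝ≥0∞) := (hN.trans_le (hmono hi₀ge)).trans_le ht.1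
      have hlt' : l < t := ENNReal.coe_lt_coe.mp h4
      have hnt : f t ∉ U a := hji₀ ▸ ht.2
      have hnoo : t ∉ Set.Ioo l c := fun h => hnt (hsub h)
      have : c ≤ t := not_lt.mp fun h => hnoo ⟨hlt', h⟩
      rw [← hcL]; exact ENNReal.coe_le_coe.mpr this
    exact absurd h2 (not_le.mpr (hlt _))

/-- Exhaustion of a killed càdlàg path by successive exit times from
a countable open cover: the exit times `τᵢ` are nondecreasing, bounded by the killing
time `ζ`, stabilize at `ζ` when `ζ < ∞`, and tend to `∞` when `ζ = ∞`. -/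
theorem stmt_2 {d : ℕ} (M : Set (EuclideanSpace ℝ (Fin d))) (hM : IsClosed M)
    (p : EuclideanSpace ℝ (Fin d)) (hp : p ∉ M)
    (U : ℕ → Set (EuclideanSpace ℝ (Fin d))) (hUopen : ∀ j, IsOpen (U j))
    (hcover : M ⊆ ⋃ j, U j) (hpU : ∀ j, p ∉ U j)
    (j : ℕ → ℕ) (hj : ∀ a : ℕ, ∃ᶠ i in atTop, j i = a)
    (f : ℝ≥0 → EuclideanSpace ℝ (Fin d))
    (hrc : ∀ t : ℝ≥0, ContinuousWithinAt f (Set.Ici t) t)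
    (hll : ∀ t : ℝ≥0, 0 < t → ∃ l, Tendsto f (nhdsWithin t (Set.Iio t)) (𝓝 l))
    (ζ : ℝ≥0∞)
    (hfM : ∀ t : ℝ≥0, (t : ℝ≥0∞) < ζ → f t ∈ M)
    (hfp : ∀ t : ℝ≥0, ζ ≤ (t : ℝ≥0∞) → f t = p)
    (τ : ℕ → ℝ≥0∞) (hτ0 : τ 0 = 0)
    (hτ : ∀ i, τ (i + 1) =
      ⨅ t ∈ {t : ℝ≥0 | τ i ≤ (t : ℝ≥0∞) ∧ f t ∉ U (j i)}, (t : ℝ≥0∞)) :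
    (Monotone τ ∧ ∀ i, τ i ≤ ζ) ∧
    (ζ < ∞ → ∃ I : ℕ, ∀ i ≥ I, τ i = ζ) ∧
    (ζ = ∞ → Tendsto τ atTop (𝓝 ∞)) := by
  have hmono : Monotone τ := by
    refine monotone_nat_of_le_succ fun i => ?_
    rw [hτ]
    exact le_iInf₂ fun t ht => ht.1
  have hbound : ∀ i, τ i ≤ ζ := by
    intro i
    induction i with
    | zero => rw [hτ0]; exact zero_le
    | succ i ih =>
      rcases eq_or_ne ζ ∞ with hζ | hζ
      · rw [hζ]; exact le_top
      · set a := ζ.toNNReal with hadef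
        have haζ : (a : ℝ≥0∞) = ζ := ENNReal.coe_toNNReal hζ
        rw [hτ, ← haζ]
        refine iInf₂_le a ⟨?_, ?_⟩
        · rw [haζ]; exact ih
        · rw [hfp a haζ.ge]; exact hpU _
  refine ⟨⟨hmono, hbound⟩, ?_, ?_⟩
  · intro hζ
    have hI : ∃ I, τ I = ζ := by
      by_contra h
      push_neg at h
      have h1 : ∀ i, τ i < ζ := fun i => (hbound i).lt_of_ne (h i)
      have hfin : (⨆ i, τ i) < ∞ := (iSup_le fun i => hbound i).trans_lt hζ
      exact stmt_2_key hM hUopen hcover hj hrc hll hfM hτ0 hmono hτ h1 hfin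
    obtain ⟨I, hI⟩ := hI
    exact ⟨I, fun i hi => le_antisymm (hbound i) (hI ▸ hmono hi)⟩
  · intro hζ
    have ht : Tendsto τ atTop (𝓝 (⨆ i, τ i)) := tendsto_atTop_iSup hmono
    rcases eq_or_ne (⨆ i, τ i) ∞ with hs | hs
    · rwa [hs] at ht
    · exfalso
      have hfin : (⨆ i, τ i) < ∞ := hs.lt_top
      have h1 : ∀ i, τ i < ζ := fun i => hζ ▸ ((le_iSup τ i).trans_lt hfin)
      exact stmt_2_key hM hUopen hcover hj hrc hll hfM hτ0 hmono hτ h1 hfin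
end

section
/- Let f, fₙ : [0,∞) → ℝ^d (n ∈ ℕ) be functions with fₙ → f uniformly on every compact subset of [0,∞). Let a ∈ [0,∞), let U, V ⊆ ℝ^d and δ > 0 be such that for every x ∈ U and y ∈ ℝ^d with ‖y − x‖ ≤ δ one has y ∈ V. Define b := inf{t ≥ a : f(t) ∉ U} ∈ [a,∞], σ̃ₙ := inf{t ≥ a : fₙ(t) ∉ V} ∈ [a,∞], and σₘ := min(inf_{n ≥ m} σ̃ₙ, b). Then: (a) if b < ∞ there exists M₀ such that σₘ = b for all m ≥ M₀; (b) if b = ∞ then σₘ → ∞ as m → ∞. Moreover, for all m ∈ ℕ, n ≥ m and t ∈ [a, σₘ) one has fₙ(t) ∈ V. -/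
open Filter
open scoped NNReal ENNReal Topology

/-- If `fₙ → f` locally uniformly, `U` is "δ-thickened inside `V`",
`b` is the first exit time of `f` from `U` after time `a`, and `σₘ` is the infimum over
`n ≥ m` of the exit times of `fₙ` from `V` after `a` (truncated at `b`), then the `σₘ`
stabilize at `b` (if `b < ∞`) or tend to `∞` (if `b = ∞`), and `fₙ(t) ∈ V` on
`[a, σₘ)` for `n ≥ m`. -/
theorem stmt_3 {d : ℕ}
    (f : ℕ → ℝ≥0 → EuclideanSpace ℝ (Fin d)) (g : ℝ≥0 → EuclideanSpace ℝ (Fin d))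
    (hconv : ∀ k : ℝ≥0, TendstoUniformlyOn f g atTop (Set.Icc 0 k))
    (a : ℝ≥0) (U V : Set (EuclideanSpace ℝ (Fin d))) (δ : ℝ) (hδ : 0 < δ)
    (hUV : ∀ x ∈ U, ∀ y : EuclideanSpace ℝ (Fin d), ‖y - x‖ ≤ δ → y ∈ V)
    (b : ℝ≥0∞) (hb : b = ⨅ t ∈ {t : ℝ≥0 | a ≤ t ∧ g t ∉ U}, (t : ℝ≥0∞))
    (σt : ℕ → ℝ≥0∞)
    (hσt : ∀ n, σt n = ⨅ t ∈ {t : ℝ≥0 | a ≤ t ∧ f n t ∉ V}, (t : ℝ≥0∞))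
    (σ : ℕ → ℝ≥0∞) (hσ : ∀ m, σ m = min (⨅ n ∈ {n : ℕ | m ≤ n}, σt n) b) :
    (b < ∞ → ∃ M₀ : ℕ, ∀ m ≥ M₀, σ m = b) ∧
    (b = ∞ → Tendsto σ atTop (𝓝 ∞)) ∧
    (∀ m n : ℕ, m ≤ n → ∀ t : ℝ≥0, a ≤ t → (t : ℝ≥0∞) < σ m → f n t ∈ V) := by
  -- if t is before the exit time b of g, then g t ∈ U
  have hgU : ∀ t : ℝ≥0, a ≤ t → (t : ℝ≥0∞) < b → g t ∈ U := by
    intro t hat htb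
    by_contra h
    have : b ≤ (t : ℝ≥0∞) := by
      rw [hb]; exact iInf₂_le t ⟨hat, h⟩
    exact absurd this (not_le.mpr htb)
  -- key: if g stays in U on [a, k), then eventually σt n ≥ k
  have key : ∀ k : ℝ≥0, (∀ t : ℝ≥0, a ≤ t → t < k → g t ∈ U) →
      ∃ N : ℕ, ∀ n ≥ N, (k : ℝ≥0∞) ≤ σt n := by
    intro k hk
    have hu := (Metric.tendstoUniformlyOn_iff.mp (hconv k)) δ hδ
    rw [eventually_atTop] at hu
    obtain ⟨N, hN⟩ := hu
    refine ⟨N, fun n hn => ?_⟩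
    rw [hσt n]
    refine le_iInf₂ fun t ht => ?_
    rw [ENNReal.coe_le_coe]
    by_contra hlt
    push_neg at hlt
    refine ht.2 (hUV _ (hk t ht.1 hlt) _ ?_)
    have hd := hN n hn t ⟨zero_le, hlt.le⟩
    rw [dist_eq_norm, norm_sub_rev] at hd
    exact hd.le
  refine ⟨?_, ?_, ?_⟩
  · -- part (a)
    intro hblt
    have hbc : (b.toNNReal : ℝ≥0∞) = b := ENNReal.coe_toNNReal hblt.ne
    obtain ⟨N, hN⟩ := key b.toNNReal (fun t hat htk =>
      hgU t hat (by rw [← hbc]; exact_mod_cast htk))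
    refine ⟨N, fun m hm => ?_⟩
    rw [hσ m]
    refine min_eq_right (le_iInf₂ fun n hn => ?_)
    rw [← hbc]
    exact hN n (hm.trans hn)
  · -- part (b)
    intro hbtop
    rw [ENNReal.tendsto_nhds_top_iff_nnreal]
    intro k
    obtain ⟨N, hN⟩ := key (k + 1) (fun t hat _ =>
      hgU t hat (by rw [hbtop]; exact ENNReal.coe_lt_top))
    rw [eventually_atTop]
    refine ⟨N, fun m hm => ?_⟩
    rw [hσ m, hbtop, min_eq_left le_top]
    have h1 : ((k + 1 : ℝ≥0) : ℝ≥0∞) ≤ ⨅ n ∈ {n : ℕ | m ≤ n}, σt n :=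
      le_iInf₂ fun n hn => hN n (hm.trans hn)
    refine lt_of_lt_of_le ?_ h1
    exact_mod_cast lt_add_one k
  · -- part (c)
    intro m n hmn t hat htσ
    by_contra hV
    have h1 : σt n ≤ (t : ℝ≥0∞) := by
      rw [hσt n]; exact iInf₂_le t ⟨hat, hV⟩
    have h2 : σ m ≤ σt n := by
      rw [hσ m]
      exact le_trans (min_le_left _ _) (iInf₂_le n hmn)
    exact absurd (h2.trans h1) (not_le.mpr htσ)
end

section
/- Let d ≥ 1 and define h : ℝ^d × ℝ^d → ℝ by h(w, z) = exp(‖z − w‖²) − 1. Then for all w, z, u, v ∈ ℝ^d the quadratic form of the second derivative of h at (w, z) satisfies D²h(w,z)[(u,v),(u,v)] ≥ ‖u − v‖², where D²h(w,z)[(u,v),(u,v)] denotes the derivative at (w,z) of the map q ↦ Dh(q)(u,v) evaluated in the direction (u,v). -/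
open scoped RealInnerProductSpace

/-- The Hessian lower bound for `h(w,z) = exp(‖z−w‖²) − 1`:
`D²h(w,z)[(u,v),(u,v)] ≥ ‖u − v‖²`. -/
theorem stmt_6 {d : ℕ} (hd : 1 ≤ d)
    (h : EuclideanSpace ℝ (Fin d) × EuclideanSpace ℝ (Fin d) → ℝ)
    (hh : ∀ q, h q = Real.exp (‖q.2 - q.1‖ ^ 2) - 1) :
    ∀ w z u v : EuclideanSpace ℝ (Fin d),
      ‖u - v‖ ^ 2 ≤ fderiv ℝ (fun q => fderiv ℝ h q (u, v)) (w, z) (u, v) := by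
  intro w z u v
  have hfun : h = fun q : (EuclideanSpace ℝ (Fin d)) × (EuclideanSpace ℝ (Fin d)) => Real.exp (⟪q.2 - q.1, q.2 - q.1⟫) - 1 := by
    funext q; rw [hh q, real_inner_self_eq_norm_sq]
  -- derivative of q ↦ q.2 - q.1
  have hf : ∀ q : (EuclideanSpace ℝ (Fin d)) × (EuclideanSpace ℝ (Fin d)), HasFDerivAt (fun p : (EuclideanSpace ℝ (Fin d)) × (EuclideanSpace ℝ (Fin d)) => p.2 - p.1)
      ((ContinuousLinearMap.snd ℝ (EuclideanSpace ℝ (Fin d)) (EuclideanSpace ℝ (Fin d))) - (ContinuousLinearMap.fst ℝ (EuclideanSpace ℝ (Fin d)) (EuclideanSpace ℝ (Fin d)))) q :=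
    fun q => (hasFDerivAt_snd).sub (hasFDerivAt_fst)
  have hg := fun q => (hf q).inner ℝ (hf q)
  have hH := fun q : (EuclideanSpace ℝ (Fin d)) × (EuclideanSpace ℝ (Fin d)) =>
    hfun ▸ (((hg q).exp).sub_const 1)
  have key : (fun q : (EuclideanSpace ℝ (Fin d)) × (EuclideanSpace ℝ (Fin d)) => fderiv ℝ h q (u, v))
      = fun q : (EuclideanSpace ℝ (Fin d)) × (EuclideanSpace ℝ (Fin d)) => Real.exp (⟪q.2 - q.1, q.2 - q.1⟫) *
          (⟪q.2 - q.1, v - u⟫ + ⟪v - u, q.2 - q.1⟫) := by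
    funext q
    rw [(hH q).fderiv]
    simp [hfun, fderivInnerCLM_apply]
  rw [key]
  -- second derivative
  have hE := (hg (w, z)).exp
  have hB := ((hf (w, z)).inner ℝ (hasFDerivAt_const (v - u) (w, z))).add
      ((hasFDerivAt_const (v - u) (w, z)).inner ℝ (hf (w, z)))
  have hD := hE.mul hB
  rw [(show HasFDerivAt (fun q : (EuclideanSpace ℝ (Fin d)) × (EuclideanSpace ℝ (Fin d)) => Real.exp (⟪q.2 - q.1, q.2 - q.1⟫) *
      (⟪q.2 - q.1, v - u⟫ + ⟪v - u, q.2 - q.1⟫)) _ (w, z) from hD).fderiv]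
  simp [fderivInnerCLM_apply, PiLp.inner_apply, -inner_self_eq_norm_sq_to_K]
  have hS : ‖u - v‖ ^ 2 = ∑ x, (v x - u x) * (v x - u x) := by
    rw [norm_sub_rev, ← real_inner_self_eq_norm_sq]
    simp [PiLp.inner_apply, -inner_self_eq_norm_sq_to_K]
  have hA : (0:ℝ) ≤ ∑ x, (z x - w x) * (z x - w x) :=
    Finset.sum_nonneg fun i _ => mul_self_nonneg _
  have hS' : (0:ℝ) ≤ ∑ x, (v x - u x) * (v x - u x) :=
    Finset.sum_nonneg fun i _ => mul_self_nonneg _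
  have hE1 : (1:ℝ) ≤ Real.exp (∑ x, (z x - w x) * (z x - w x)) := Real.one_le_exp hA
  set S := ∑ x, (v x - u x) * (v x - u x) with hSdef
  set T := ∑ x, (z x - w x) * (v x - u x) with hTdef
  set T' := ∑ x, (v x - u x) * (z x - w x) with hT'def
  set Ex := Real.exp (∑ x, (z x - w x) * (z x - w x)) with hExdef
  rw [hS]
  nlinarith [mul_nonneg (le_trans zero_le_one hE1) hS', sq_nonneg (T + T'),
    mul_nonneg (le_trans zero_le_one hE1) (sq_nonneg (T + T'))]
end

section
/- Let d ≥ 1 and define h : ℝ^d × ℝ^d → ℝ by h(w, z) = exp(‖z − w‖²) − 1. Then for all w, z, a, b ∈ ℝ^d one has the second-order Taylor lower bound h(w + a, z + b) − h(w, z) − Dh(w,z)(a, b) ≥ (1/2)·‖a − b‖², where Dh(w,z) is the Fréchet derivative of h at (w,z). -/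
open scoped RealInnerProductSpace

/-- Second-order Taylor lower bound for `h(w,z) = exp(‖z−w‖²) − 1`:
`h(w+a, z+b) − h(w,z) − Dh(w,z)(a,b) ≥ ½‖a − b‖²`. -/
theorem stmt_9 {d : ℕ} (hd : 1 ≤ d)
    (h : EuclideanSpace ℝ (Fin d) × EuclideanSpace ℝ (Fin d) → ℝ)
    (hh : ∀ q, h q = Real.exp (‖q.2 - q.1‖ ^ 2) - 1) :
    ∀ w z a b : EuclideanSpace ℝ (Fin d),
      (1 / 2) * ‖a - b‖ ^ 2 ≤ h (w + a, z + b) - h (w, z) - fderiv ℝ h (w, z) (a, b) := by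
  intro w z a b
  have hfun : h = fun q : EuclideanSpace ℝ (Fin d) × EuclideanSpace ℝ (Fin d) =>
      Real.exp ⟪q.2 - q.1, q.2 - q.1⟫ - 1 := by
    funext q; rw [hh q, real_inner_self_eq_norm_sq]
  subst hfun
  have hL : HasFDerivAt (fun q : EuclideanSpace ℝ (Fin d) × EuclideanSpace ℝ (Fin d) => q.2 - q.1)
      (ContinuousLinearMap.snd ℝ (EuclideanSpace ℝ (Fin d)) (EuclideanSpace ℝ (Fin d)) -
        ContinuousLinearMap.fst ℝ (EuclideanSpace ℝ (Fin d)) (EuclideanSpace ℝ (Fin d))) (w, z) :=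
    ((ContinuousLinearMap.snd ℝ (EuclideanSpace ℝ (Fin d)) (EuclideanSpace ℝ (Fin d)) -
      ContinuousLinearMap.fst ℝ (EuclideanSpace ℝ (Fin d)) (EuclideanSpace ℝ (Fin d)))).hasFDerivAt
  have hD := (hL.inner ℝ hL).exp.sub_const 1
  rw [hD.fderiv]
  simp only [ContinuousLinearMap.smul_apply, ContinuousLinearMap.comp_apply,
    ContinuousLinearMap.prod_apply, ContinuousLinearMap.sub_apply,
    ContinuousLinearMap.coe_snd', ContinuousLinearMap.coe_fst', fderivInnerCLM_apply,
    smul_eq_mul]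
  set c := z - w
  set v := b - a
  have hexpand : ((z + b) - (w + a) : EuclideanSpace ℝ (Fin d)) = c + v := by
    simp [c, v]; abel
  have hexp2 : ⟪c + v, c + v⟫ = ⟪c, c⟫ + 2 * ⟪c, v⟫ + ⟪v, v⟫ := by
    rw [real_inner_add_add_self]
  have hab : ‖a - b‖ ^ 2 = ⟪v, v⟫ := by
    rw [real_inner_self_eq_norm_sq, ← norm_neg]; simp [v]
  have hsym : ⟪v, c⟫ = ⟪c, v⟫ := real_inner_comm c v
  simp only [hexpand, hexp2, hab, hsym]
  set s := ⟪c, c⟫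
  set p := ⟪c, v⟫
  set q := ⟪v, v⟫
  have hq : 0 ≤ q := real_inner_self_nonneg
  have hs : 0 ≤ s := real_inner_self_nonneg
  have h1 : (2 * p + q) + 1 ≤ Real.exp (2 * p + q) := Real.add_one_le_exp _
  have h2 : (1 : ℝ) ≤ Real.exp s := Real.one_le_exp hs
  have h3 : 0 < Real.exp s := Real.exp_pos s
  have h4 : Real.exp (s + 2 * p + q) = Real.exp s * Real.exp (2 * p + q) := by
    rw [← Real.exp_add]; ring_nf
  nlinarith [mul_le_mul_of_nonneg_left h1 h3.le]
end
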